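/- arXiv:1602.08028 — 9 statements merged into one kernel-verified Lean document; each statement's English description precedes it below -/
import Mathlib

section
/- Every positive rational number occurs in the sequence exactly once; i.e., the map n ↦ a(n) is a bijection from the positive integers to the positive rational numbers. -/
/-!
Every `a n` with `n ≥ 1` is positive, the even-indexed terms exceed `1` and the odd-indexed terms
beyond `a 1 = 1` lie below `1`. Hence the value `a n` tells which of the three cases `n = 1`,
`n = 2k`, `n = 2k + 1` occurs, and peeling off the last step of the recursion gives injectivity by
induction. Conversely `p / r` is reached from `(p - r) / r` when `p > r` and from `(r - p) / p`
when `p < r`: this is the subtractive Euclidean algorithm run backwards, so every positive fraction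
occurs.
-/

theorem Nat.eq_one_or_exists_two_mul_or_exists_two_mul_add_one {n : ℕ} (hn : 1 ≤ n) :
    n = 1 ∨ (∃ k, 1 ≤ k ∧ n = 2 * k) ∨ (∃ k, 1 ≤ k ∧ n = 2 * k + 1) := by
  obtain ⟨k, rfl | rfl⟩ := Nat.even_or_odd' n
  · exact Or.inr (Or.inl ⟨k, by omega, rfl⟩)
  · rcases Nat.eq_zero_or_pos k with rfl | hk
    · exact Or.inl rfl
    · exact Or.inr (Or.inr ⟨k, hk, rfl⟩)

@[elab_as_elim]
theorem Nat.binary_induction_from_one {P : ∀ n, 1 ≤ n → Prop} (one : P 1 le_rfl)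
    (two_mul : ∀ n (hn : 1 ≤ n), P n hn → P (2 * n) (by omega))
    (two_mul_add_one : ∀ n (hn : 1 ≤ n), P n hn → P (2 * n + 1) (by omega))
    (n : ℕ) (hn : 1 ≤ n) : P n hn := by
  induction n using Nat.strong_induction_on with
  | _ n ih =>
  rcases Nat.eq_one_or_exists_two_mul_or_exists_two_mul_add_one hn with
    rfl | ⟨k, hk, rfl⟩ | ⟨k, hk, rfl⟩
  · exact one
  · exact two_mul k hk (ih k (by omega) hk)
  · exact two_mul_add_one k hk (ih k (by omega) hk)

structure IsSuccInvSequence (a : ℕ → ℚ) : Prop where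
  one : a 1 = 1
  two_mul : ∀ n : ℕ, 1 ≤ n → a (2 * n) = a n + 1
  two_mul_add_one : ∀ n : ℕ, 1 ≤ n → a (2 * n + 1) = 1 / a (2 * n)

namespace IsSuccInvSequence

variable {a : ℕ → ℚ}

theorem pos (ha : IsSuccInvSequence a) {n : ℕ} (hn : 1 ≤ n) : 0 < a n := by
  induction n, hn using Nat.binary_induction_from_one with
  | one => simp [ha.one]
  | two_mul n hn ih => rw [ha.two_mul n hn]; positivity
  | two_mul_add_one n hn ih => rw [ha.two_mul_add_one n hn, ha.two_mul n hn]; positivity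

theorem one_lt_two_mul (ha : IsSuccInvSequence a) {n : ℕ} (hn : 1 ≤ n) : 1 < a (2 * n) := by
  rw [ha.two_mul n hn]
  linarith [ha.pos hn]

theorem two_mul_add_one_lt_one (ha : IsSuccInvSequence a) {n : ℕ} (hn : 1 ≤ n) :
    a (2 * n + 1) < 1 := by
  rw [ha.two_mul_add_one n hn, div_lt_one (by linarith [ha.one_lt_two_mul hn])]
  exact ha.one_lt_two_mul hn

theorem eq_one_of_apply_eq_one (ha : IsSuccInvSequence a) {n : ℕ} (hn : 1 ≤ n) (h : a n = 1) :
    n = 1 := by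
  rcases Nat.eq_one_or_exists_two_mul_or_exists_two_mul_add_one hn with
    rfl | ⟨k, hk, rfl⟩ | ⟨k, hk, rfl⟩
  · rfl
  · linarith [ha.one_lt_two_mul hk]
  · linarith [ha.two_mul_add_one_lt_one hk]

theorem exists_eq_two_mul_of_one_lt (ha : IsSuccInvSequence a) {n : ℕ} (hn : 1 ≤ n)
    (h : 1 < a n) : ∃ k, 1 ≤ k ∧ n = 2 * k := by
  rcases Nat.eq_one_or_exists_two_mul_or_exists_two_mul_add_one hn with
    rfl | hk | ⟨k, hk, rfl⟩
  · linarith [ha.one]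
  · exact hk
  · linarith [ha.two_mul_add_one_lt_one hk]

theorem exists_eq_two_mul_add_one_of_lt_one (ha : IsSuccInvSequence a) {n : ℕ} (hn : 1 ≤ n)
    (h : a n < 1) : ∃ k, 1 ≤ k ∧ n = 2 * k + 1 := by
  rcases Nat.eq_one_or_exists_two_mul_or_exists_two_mul_add_one hn with
    rfl | ⟨k, hk, rfl⟩ | hk
  · linarith [ha.one]
  · linarith [ha.one_lt_two_mul hk]
  · exact hk

theorem injOn (ha : IsSuccInvSequence a) : Set.InjOn a {n : ℕ | 1 ≤ n} := by
  intro m (hm : 1 ≤ m)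
  induction m, hm using Nat.binary_induction_from_one with
  | one =>
    rintro n (hn : 1 ≤ n) h
    exact (ha.eq_one_of_apply_eq_one hn (h ▸ ha.one)).symm
  | two_mul j hj ih =>
    rintro n (hn : 1 ≤ n) h
    obtain ⟨k, hk, rfl⟩ := ha.exists_eq_two_mul_of_one_lt hn (h ▸ ha.one_lt_two_mul hj)
    have hjk : a j = a k := by
      linarith [ha.two_mul j hj, ha.two_mul k hk]
    rw [ih hk hjk]
  | two_mul_add_one j hj ih =>
    rintro n (hn : 1 ≤ n) h
    obtain ⟨k, hk, rfl⟩ :=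
      ha.exists_eq_two_mul_add_one_of_lt_one hn (h ▸ ha.two_mul_add_one_lt_one hj)
    rw [ha.two_mul_add_one j hj, ha.two_mul_add_one k hk, one_div, one_div, inv_inj] at h
    have hjk : a j = a k := by
      linarith [ha.two_mul j hj, ha.two_mul k hk]
    rw [ih hk hjk]

theorem exists_apply_eq_div (ha : IsSuccInvSequence a) {p r : ℕ} (hp : 0 < p) (hr : 0 < r) :
    ∃ n, 1 ≤ n ∧ a n = p / r := by
  rcases lt_trichotomy p r with h | rfl | h
  · obtain ⟨n, hn, han⟩ := ha.exists_apply_eq_div (p := r - p) (r := p) (by omega) hp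
    refine ⟨2 * n + 1, by omega, ?_⟩
    rw [ha.two_mul_add_one n hn, ha.two_mul n hn, han, Nat.cast_sub h.le,
      div_add_one (by positivity), sub_add_cancel, one_div_div]
  · exact ⟨1, le_rfl, by rw [ha.one, div_self (by positivity)]⟩
  · obtain ⟨n, hn, han⟩ := ha.exists_apply_eq_div (p := p - r) (r := r) (by omega) hr
    refine ⟨2 * n, by omega, ?_⟩
    rw [ha.two_mul n hn, han, Nat.cast_sub h.le, div_add_one (by positivity), sub_add_cancel]
termination_by p + r

theorem surjOn (ha : IsSuccInvSequence a) : Set.SurjOn a {n : ℕ | 1 ≤ n} {q : ℚ | 0 < q} := by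
  intro q (hq : 0 < q)
  have hnum : ((q.num.natAbs : ℤ) : ℚ) = q.num := by
    rw [Int.natAbs_of_nonneg (Rat.num_nonneg.mpr hq.le)]
  have hnum_pos : 0 < q.num.natAbs := Int.natAbs_pos.mpr (Rat.num_pos.mpr hq).ne'
  obtain ⟨n, hn, han⟩ := ha.exists_apply_eq_div hnum_pos q.pos
  refine ⟨n, hn, ?_⟩
  rw [han, ← Int.cast_natCast, hnum, Rat.num_div_den]

end IsSuccInvSequence

theorem stmt0 (a : ℕ → ℚ) (h1 : a 1 = 1)
    (h2 : ∀ n : ℕ, 1 ≤ n → a (2 * n) = a n + 1)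
    (h3 : ∀ n : ℕ, 1 ≤ n → a (2 * n + 1) = 1 / a (2 * n)) :
    Set.BijOn a {n : ℕ | 1 ≤ n} {q : ℚ | 0 < q} := by
  have ha : IsSuccInvSequence a := ⟨h1, h2, h3⟩
  exact ⟨fun _ hn => ha.pos hn, ha.injOn, ha.surjOn⟩
end

section
/- For all n ≥ 1, 0 < a(2n+1) and a(2n+1) ≤ 1; moreover the map n ↦ a(2n+1) is a bijection from the positive integers onto the rational numbers in the open interval (0,1). -/
/-!
The values `a n` label the nodes of the infinite binary tree rooted at `1` in which `q` has
children `q + 1` (at `2n`) and `1 / (q + 1)` (at `2n + 1`). The root is `1`, left children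
exceed `1` and right children lie in `(0, 1)`, so the value determines the last step to a node
and injectivity follows by induction. Conversely every `q > 0` other than `1` is a child of
`q - 1` or of `1 / q - 1`, which have smaller `|num| + den`; hence every positive rational
occurs, and those in `(0, 1)` occur exactly at the odd indices.
-/

theorem Rat.num_inv_of_pos {q : ℚ} (hq : 0 < q) : q⁻¹.num = q.den := by
  simp [Rat.num_inv, Int.sign_eq_one_of_pos (Rat.num_pos.2 hq)]

theorem Rat.num_sub_one (q : ℚ) : (q - 1).num = q.num - q.den := by
  have h := Rat.mul_den_eq_num (q - 1)
  rw [Rat.sub_ofNat_den, sub_mul, one_mul, Rat.mul_den_eq_num] at h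
  exact_mod_cast h.symm

theorem Rat.natAbs_num_add_den_sub_one_lt {q : ℚ} (hq : 1 < q) :
    (q - 1).num.natAbs + (q - 1).den < q.num.natAbs + q.den := by
  have hnum : 0 < q.num - q.den := Rat.num_sub_one q ▸ Rat.num_pos.2 (sub_pos.2 hq)
  rw [Rat.num_sub_one, Rat.sub_ofNat_den]
  have := q.den_pos
  omega

theorem Rat.natAbs_num_add_den_inv {q : ℚ} (hq : 0 < q) :
    q⁻¹.num.natAbs + q⁻¹.den = q.num.natAbs + q.den := by
  rw [Rat.num_inv_of_pos hq, Rat.den_inv_of_ne_zero hq.ne', Int.natAbs_natCast, add_comm]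

theorem Nat.eq_one_or_exists_eq_two_mul_or_two_mul_add_one {n : ℕ} (hn : 1 ≤ n) :
    n = 1 ∨ ∃ k, 1 ≤ k ∧ (n = 2 * k ∨ n = 2 * k + 1) := by
  obtain ⟨k, rfl | rfl⟩ := Nat.even_or_odd' n
  · exact Or.inr ⟨k, by omega, Or.inl rfl⟩
  · rcases k.eq_zero_or_pos with rfl | hk
    · exact Or.inl rfl
    · exact Or.inr ⟨k, hk, Or.inr rfl⟩

structure IsRatTreeSeq (a : ℕ → ℚ) : Prop where
  one : a 1 = 1
  two_mul : ∀ n : ℕ, 1 ≤ n → a (2 * n) = a n + 1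
  two_mul_add_one : ∀ n : ℕ, 1 ≤ n → a (2 * n + 1) = 1 / a (2 * n)

namespace IsRatTreeSeq

variable {a : ℕ → ℚ} (ha : IsRatTreeSeq a)
include ha

theorem apply_two_mul_add_one {n : ℕ} (hn : 1 ≤ n) : a (2 * n + 1) = (a n + 1)⁻¹ := by
  rw [ha.two_mul_add_one n hn, ha.two_mul n hn, one_div]

theorem pos {n : ℕ} (hn : 1 ≤ n) : 0 < a n := by
  induction n using Nat.strong_induction_on with
  | _ n ih =>
    rcases Nat.eq_one_or_exists_eq_two_mul_or_two_mul_add_one hn with rfl | ⟨k, hk, rfl | rfl⟩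
    · rw [ha.one]; exact one_pos
    · rw [ha.two_mul k hk]; have := ih k (by omega) hk; positivity
    · rw [ha.apply_two_mul_add_one hk]; have := ih k (by omega) hk; positivity

theorem one_lt_apply_two_mul {k : ℕ} (hk : 1 ≤ k) : 1 < a (2 * k) := by
  rw [ha.two_mul k hk]
  linarith [ha.pos hk]

theorem apply_two_mul_add_one_lt_one {k : ℕ} (hk : 1 ≤ k) : a (2 * k + 1) < 1 := by
  rw [ha.two_mul_add_one k hk, div_lt_one (by linarith [ha.pos (n := 2 * k) (by omega)])]
  exact ha.one_lt_apply_two_mul hk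

theorem apply_eq_one_iff {n : ℕ} (hn : 1 ≤ n) : a n = 1 ↔ n = 1 := by
  refine ⟨fun h => ?_, fun h => h ▸ ha.one⟩
  rcases Nat.eq_one_or_exists_eq_two_mul_or_two_mul_add_one hn with rfl | ⟨k, hk, rfl | rfl⟩
  · rfl
  · linarith [ha.one_lt_apply_two_mul hk]
  · linarith [ha.apply_two_mul_add_one_lt_one hk]

theorem one_lt_apply_iff {n : ℕ} (hn : 1 ≤ n) : 1 < a n ↔ ∃ k, 1 ≤ k ∧ n = 2 * k := by
  refine ⟨fun h => ?_, fun ⟨k, hk, hnk⟩ => hnk ▸ ha.one_lt_apply_two_mul hk⟩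
  rcases Nat.eq_one_or_exists_eq_two_mul_or_two_mul_add_one hn with rfl | ⟨k, hk, rfl | rfl⟩
  · linarith [ha.one]
  · exact ⟨k, hk, rfl⟩
  · linarith [ha.apply_two_mul_add_one_lt_one hk]

theorem apply_lt_one_iff {n : ℕ} (hn : 1 ≤ n) : a n < 1 ↔ ∃ k, 1 ≤ k ∧ n = 2 * k + 1 := by
  refine ⟨fun h => ?_, fun ⟨k, hk, hnk⟩ => hnk ▸ ha.apply_two_mul_add_one_lt_one hk⟩
  rcases Nat.eq_one_or_exists_eq_two_mul_or_two_mul_add_one hn with rfl | ⟨k, hk, rfl | rfl⟩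
  · linarith [ha.one]
  · linarith [ha.one_lt_apply_two_mul hk]
  · exact ⟨k, hk, rfl⟩

theorem injOn : Set.InjOn a {n | 1 ≤ n} := by
  intro m hm n hn hmn
  induction m using Nat.strong_induction_on generalizing n with
  | _ m ih =>
    rcases lt_trichotomy (a m) 1 with hlt | heq | hgt
    · obtain ⟨j, hj, rfl⟩ := (ha.apply_lt_one_iff hm).1 hlt
      obtain ⟨k, hk, rfl⟩ := (ha.apply_lt_one_iff hn).1 (hmn ▸ hlt)
      rw [ha.apply_two_mul_add_one hj, ha.apply_two_mul_add_one hk, inv_inj, add_left_inj] at hmn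
      rw [ih j (by omega) hj hk hmn]
    · rw [(ha.apply_eq_one_iff hm).1 heq, (ha.apply_eq_one_iff hn).1 (hmn ▸ heq)]
    · obtain ⟨j, hj, rfl⟩ := (ha.one_lt_apply_iff hm).1 hgt
      obtain ⟨k, hk, rfl⟩ := (ha.one_lt_apply_iff hn).1 (hmn ▸ hgt)
      rw [ha.two_mul j hj, ha.two_mul k hk, add_left_inj] at hmn
      rw [ih j (by omega) hj hk hmn]

theorem surjOn : Set.SurjOn a {n | 1 ≤ n} (Set.Ioi 0) := by
  intro q hq
  induction hs : q.num.natAbs + q.den using Nat.strong_induction_on generalizing q with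
  | _ s ih =>
    rcases lt_trichotomy q 1 with hlt | rfl | hgt
    · have hinv : 1 < q⁻¹ := (one_lt_inv₀ hq).2 hlt
      have hrs : (q⁻¹ - 1).num.natAbs + (q⁻¹ - 1).den < s :=
        hs ▸ Rat.natAbs_num_add_den_inv hq ▸ Rat.natAbs_num_add_den_sub_one_lt hinv
      obtain ⟨n, hn : 1 ≤ n, hnr⟩ := ih _ hrs (sub_pos.2 hinv) rfl
      refine ⟨2 * n + 1, Nat.le_add_left 1 _, ?_⟩
      rw [ha.apply_two_mul_add_one hn, hnr, sub_add_cancel, inv_inv]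
    · exact ⟨1, le_refl 1, ha.one⟩
    · obtain ⟨n, hn : 1 ≤ n, hnr⟩ :=
        ih _ (hs ▸ Rat.natAbs_num_add_den_sub_one_lt hgt) (sub_pos.2 hgt) rfl
      exact ⟨2 * n, (by omega : 1 ≤ 2 * n), by rw [ha.two_mul n hn, hnr, sub_add_cancel]⟩

theorem bijOn : Set.BijOn a {n | 1 ≤ n} (Set.Ioi 0) :=
  ⟨fun _ hn => ha.pos hn, ha.injOn, ha.surjOn⟩

end IsRatTreeSeq

theorem stmt4 (a : ℕ → ℚ) (h1 : a 1 = 1)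
    (h2 : ∀ n : ℕ, 1 ≤ n → a (2 * n) = a n + 1)
    (h3 : ∀ n : ℕ, 1 ≤ n → a (2 * n + 1) = 1 / a (2 * n)) :
    (∀ n : ℕ, 1 ≤ n → 0 < a (2 * n + 1) ∧ a (2 * n + 1) ≤ 1) ∧
      Set.BijOn (fun n : ℕ => a (2 * n + 1)) {n : ℕ | 1 ≤ n}
        {q : ℚ | 0 < q ∧ q < 1} := by
  have ha : IsRatTreeSeq a := ⟨h1, h2, h3⟩
  have hbij := ha.bijOn
  have hodd : ∀ n : ℕ, 1 ≤ n → 0 < a (2 * n + 1) ∧ a (2 * n + 1) < 1 := fun n hn =>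
    ⟨ha.pos (Nat.le_add_left 1 _), ha.apply_two_mul_add_one_lt_one hn⟩
  refine ⟨fun n hn => ⟨(hodd n hn).1, (hodd n hn).2.le⟩, hodd, ?_, ?_⟩
  · intro m _ n _ hmn
    have := hbij.injOn (Nat.le_add_left 1 (2 * m)) (Nat.le_add_left 1 (2 * n)) hmn
    omega
  · rintro q ⟨hq0, hq1⟩
    obtain ⟨m, hm : 1 ≤ m, rfl⟩ := hbij.surjOn hq0
    obtain ⟨k, hk, rfl⟩ := (ha.apply_lt_one_iff hm).1 hq1
    exact ⟨k, hk, rfl⟩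
end

section
/- For every rational number q with 0 < q, if q > 1 then there exists m with q = a(2m), and if q < 1 then there exists m with q = a(2m+1). -/
/-!
The values `a (2m)` contain `a 2 = 2` and are closed under `q ↦ q + 1` (as `a (4m) = a (2m) + 1`)
and `q ↦ 1 + q⁻¹` (as `a (4m + 2) = a (2m + 1) + 1 = 1 / a (2m) + 1`). Every fraction `p / d > 1`
is reached from `2` by these maps: `p / d - 1 = (p - d) / d` is either `1`, or a fraction `> 1`, or
the inverse of one, each with smaller numerator. Rationals below `1` are the inverses
`a (2m + 1) = 1 / a (2m)`.
-/

theorem Rat.natCast_div_mem_of_lt {S : Set ℚ} (h2 : (2 : ℚ) ∈ S) (hadd : ∀ q ∈ S, q + 1 ∈ S)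
    (hinv : ∀ q ∈ S, 1 + q⁻¹ ∈ S) (p : ℕ) : ∀ d : ℕ, 0 < d → d < p → (p / d : ℚ) ∈ S := by
  induction p using Nat.strong_induction_on with
  | _ p ih =>
    intro d hd hdp
    have hd' : (d : ℚ) ≠ 0 := by positivity
    have hsplit : (p / d : ℚ) = 1 + ((p - d : ℕ) : ℚ) / d := by
      rw [Nat.cast_sub hdp.le]
      field_simp
      ring
    rcases lt_trichotomy (p - d) d with hlt | heq | hgt
    · have := hinv _ (ih d hdp (p - d) (by omega) hlt)
      rwa [inv_div, ← hsplit] at this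
    · rwa [hsplit, heq, div_self hd', one_add_one_eq_two]
    · have := hadd _ (ih (p - d) (by omega) d hd hgt)
      rwa [add_comm, ← hsplit] at this

theorem Rat.mem_of_one_lt {S : Set ℚ} (h2 : (2 : ℚ) ∈ S) (hadd : ∀ q ∈ S, q + 1 ∈ S)
    (hinv : ∀ q ∈ S, 1 + q⁻¹ ∈ S) {q : ℚ} (hq : 1 < q) : q ∈ S := by
  have hnum : 0 < q.num := Rat.num_pos.mpr (one_pos.trans hq)
  lift q.num to ℕ using hnum.le with p hp
  have hq' : q = (p / q.den : ℚ) := by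
    rw [← Int.cast_natCast, hp, Rat.num_div_den]
  have hdp : q.den < p := by
    rw [hq', one_lt_div (by exact_mod_cast q.pos)] at hq
    exact_mod_cast hq
  rw [hq']
  exact Rat.natCast_div_mem_of_lt h2 hadd hinv p q.den q.pos hdp

theorem stmt5 (a : ℕ → ℚ) (h1 : a 1 = 1)
    (h2 : ∀ n : ℕ, 1 ≤ n → a (2 * n) = a n + 1)
    (h3 : ∀ n : ℕ, 1 ≤ n → a (2 * n + 1) = 1 / a (2 * n)) :
    ∀ q : ℚ, 0 < q →
      (1 < q → ∃ m : ℕ, 1 ≤ m ∧ q = a (2 * m)) ∧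
      (q < 1 → ∃ m : ℕ, 1 ≤ m ∧ q = a (2 * m + 1)) := by
  have hS : ∀ q : ℚ, 1 < q → ∃ m : ℕ, 1 ≤ m ∧ q = a (2 * m) := by
    intro q hq
    refine Rat.mem_of_one_lt (S := {q | ∃ m : ℕ, 1 ≤ m ∧ q = a (2 * m)}) ?_ ?_ ?_ hq
    · exact ⟨1, le_rfl, by rw [h2 1 le_rfl, h1]; norm_num⟩
    · rintro _ ⟨m, hm, rfl⟩
      exact ⟨2 * m, by omega, by rw [h2 (2 * m) (by omega)]⟩
    · rintro _ ⟨m, hm, rfl⟩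
      exact ⟨2 * m + 1, by omega, by rw [h2 (2 * m + 1) (by omega), h3 m hm, one_div, add_comm]⟩
  intro q hq0
  refine ⟨hS q, fun hq1 => ?_⟩
  obtain ⟨m, hm, hqm⟩ := hS q⁻¹ (one_lt_inv₀ hq0 |>.mpr hq1)
  exact ⟨m, hm, by rw [h3 m hm, ← hqm, one_div, inv_inv]⟩
end

section
/- If p, q are positive integers, then p/q occurs in the sequence: there exists n ≥ 1 with a(n) = p/q. (Proof by strong induction on p + q.) -/
/-! Induct on `p + q`. For `p = q` take `n = 1`. For `q < p`, if `a n = (p - q) / q` then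
`a (2n) = p / q`. For `p < q`, if `a n = (q - p) / p` then `a (2n) = q / p` and hence
`a (2n + 1) = p / q`. -/

lemma Nat.cast_sub_div_add_one {p q : ℕ} (hqp : q ≤ p) (hq : q ≠ 0) :
    ((p - q : ℕ) : ℚ) / q + 1 = p / q := by
  rw [Nat.cast_sub hqp, sub_div, div_self (Nat.cast_ne_zero.mpr hq), sub_add_cancel]

theorem exists_pos_eq_div (a : ℕ → ℚ) (h1 : a 1 = 1)
    (h2 : ∀ n : ℕ, 1 ≤ n → a (2 * n) = a n + 1)
    (h3 : ∀ n : ℕ, 1 ≤ n → a (2 * n + 1) = 1 / a (2 * n)) {p q : ℕ} (hp : 0 < p) (hq : 0 < q) :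
    ∃ n : ℕ, 1 ≤ n ∧ a n = (p : ℚ) / (q : ℚ) := by
  rcases lt_trichotomy p q with hpq | rfl | hqp
  · obtain ⟨n, hn, han⟩ := exists_pos_eq_div a h1 h2 h3 (Nat.sub_pos_of_lt hpq) hp
    refine ⟨2 * n + 1, by omega, ?_⟩
    rw [h3 n hn, h2 n hn, han, Nat.cast_sub_div_add_one hpq.le hp.ne', one_div_div]
  · exact ⟨1, le_rfl, by rw [h1, div_self (Nat.cast_ne_zero.mpr hp.ne')]⟩
  · obtain ⟨n, hn, han⟩ := exists_pos_eq_div a h1 h2 h3 (Nat.sub_pos_of_lt hqp) hq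
    refine ⟨2 * n, by omega, ?_⟩
    rw [h2 n hn, han, Nat.cast_sub_div_add_one hqp.le hq.ne']
termination_by p + q

theorem stmt6 (a : ℕ → ℚ) (h1 : a 1 = 1)
    (h2 : ∀ n : ℕ, 1 ≤ n → a (2 * n) = a n + 1)
    (h3 : ∀ n : ℕ, 1 ≤ n → a (2 * n + 1) = 1 / a (2 * n)) :
    ∀ p q : ℕ, 1 ≤ p → 1 ≤ q → ∃ n : ℕ, 1 ≤ n ∧ a n = (p : ℚ) / (q : ℚ) :=
  fun _ _ hp hq => exists_pos_eq_div a h1 h2 h3 hp hq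
end

section
/- The sequence a is injective on positive integers: if m, n ≥ 1 and a(m) = a(n), then m = n. -/
theorem stmt7 (a : ℕ → ℚ) (h1 : a 1 = 1)
    (h2 : ∀ n : ℕ, 1 ≤ n → a (2 * n) = a n + 1)
    (h3 : ∀ n : ℕ, 1 ≤ n → a (2 * n + 1) = 1 / a (2 * n)) :
    ∀ m n : ℕ, 1 ≤ m → 1 ≤ n → a m = a n → m = n := by
  have pos : ∀ n : ℕ, 1 ≤ n → 0 < a n := by
    intro n
    induction n using Nat.strong_induction_on with
    | _ n ih =>
      intro hn
      rcases Nat.even_or_odd n with ⟨k, hk⟩ | ⟨k, hk⟩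
      · have hk1 : 1 ≤ k := by omega
        have hkn : k < n := by omega
        have : n = 2 * k := by omega
        subst this
        rw [h2 k hk1]
        linarith [ih k hkn hk1]
      · rcases Nat.eq_zero_or_pos k with h0 | h0
        · have : n = 1 := by omega
          rw [this, h1]; norm_num
        · have : n = 2 * k + 1 := by omega
          subst this
          rw [h3 k h0]
          have h2k : 0 < a (2 * k) := ih (2 * k) (by omega) (by omega)
          positivity
  have gt1 : ∀ k : ℕ, 1 ≤ k → 1 < a (2 * k) := by
    intro k hk
    rw [h2 k hk]
    linarith [pos k hk]
  have lt1 : ∀ k : ℕ, 1 ≤ k → a (2 * k + 1) < 1 := by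
    intro k hk
    rw [h3 k hk]
    have h := gt1 k hk
    rw [div_lt_one (by linarith)]
    linarith
  intro m
  induction m using Nat.strong_induction_on with
  | _ m ih =>
    intro n hm hn he
    rcases Nat.even_or_odd m with ⟨j, hj⟩ | ⟨j, hj⟩ <;>
      rcases Nat.even_or_odd n with ⟨k, hk⟩ | ⟨k, hk⟩
    · -- both even
      have hj1 : 1 ≤ j := by omega
      have hk1 : 1 ≤ k := by omega
      have hm' : m = 2 * j := by omega
      have hn' : n = 2 * k := by omega
      subst hm'; subst hn'
      rw [h2 j hj1, h2 k hk1] at he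
      have : j = k := ih j (by omega) k hj1 hk1 (by linarith)
      omega
    · -- m even, n odd
      have hj1 : 1 ≤ j := by omega
      have hm' : m = 2 * j := by omega
      subst hm'
      rcases Nat.eq_zero_or_pos k with h0 | h0
      · have : n = 1 := by omega
        subst this
        rw [h1] at he
        have := gt1 j hj1
        linarith
      · have hn' : n = 2 * k + 1 := by omega
        subst hn'
        have := gt1 j hj1
        have := lt1 k h0
        linarith
    · -- m odd, n even
      have hk1 : 1 ≤ k := by omega
      have hn' : n = 2 * k := by omega
      subst hn'
      rcases Nat.eq_zero_or_pos j with h0 | h0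
      · have : m = 1 := by omega
        subst this
        rw [h1] at he
        have := gt1 k hk1
        linarith
      · have hm' : m = 2 * j + 1 := by omega
        subst hm'
        have := gt1 k hk1
        have := lt1 j h0
        linarith
    · -- both odd
      rcases Nat.eq_zero_or_pos j with h0 | h0
      · rcases Nat.eq_zero_or_pos k with h0' | h0'
        · omega
        · have hm' : m = 1 := by omega
          have hn' : n = 2 * k + 1 := by omega
          subst hm'; subst hn'
          rw [h1] at he
          have := lt1 k h0'
          linarith
      · rcases Nat.eq_zero_or_pos k with h0' | h0'
        · have hm' : m = 2 * j + 1 := by omega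
          have hn' : n = 1 := by omega
          subst hm'; subst hn'
          rw [h1] at he
          have := lt1 j h0
          linarith
        · have hm' : m = 2 * j + 1 := by omega
          have hn' : n = 2 * k + 1 := by omega
          subst hm'; subst hn'
          rw [h3 j h0, h3 k h0'] at he
          have pj : 0 < a (2 * j) := pos (2 * j) (by omega)
          have pk : 0 < a (2 * k) := pos (2 * k) (by omega)
          have heq : a (2 * j) = a (2 * k) := by
            field_simp at he
            linarith
          have : 2 * j = 2 * k := ih (2 * j) (by omega) (2 * k) (by omega) (by omega) heq
          omega
end

section
/- If m, n ≥ 1 and a(m) = a(n), then m and n have the same parity. -/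
theorem stmt8 (a : ℕ → ℚ) (h1 : a 1 = 1)
    (h2 : ∀ n : ℕ, 1 ≤ n → a (2 * n) = a n + 1)
    (h3 : ∀ n : ℕ, 1 ≤ n → a (2 * n + 1) = 1 / a (2 * n)) :
    ∀ m n : ℕ, 1 ≤ m → 1 ≤ n → a m = a n → (Even m ↔ Even n) := by
  have key : ∀ n : ℕ, 1 ≤ n → 0 < a n ∧ (Even n → 1 < a n) ∧ (¬ Even n → a n ≤ 1) := by
    intro n
    induction n using Nat.strong_induction_on with
    | _ n ih =>
      intro hn
      rcases Nat.even_or_odd n with he | ho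
      · obtain ⟨k, hk⟩ := he
        have hk1 : 1 ≤ k := by omega
        obtain ⟨hpos, -, -⟩ := ih k (by omega) hk1
        have han : a n = a k + 1 := by
          rw [hk, show k + k = 2 * k by ring]; exact h2 k hk1
        exact ⟨by linarith, fun _ => by linarith,
          fun h => absurd ⟨k, hk⟩ h⟩
      · obtain ⟨k, hk⟩ := ho
        rcases Nat.eq_zero_or_pos k with h0 | hk1
        · subst h0; simp only [Nat.mul_zero, Nat.zero_add] at hk; subst hk
          refine ⟨by rw [h1]; norm_num, fun h => ?_, fun _ => by rw [h1]⟩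
          · exact absurd h (by decide)
        · obtain ⟨hpos, -, -⟩ := ih k (by omega) hk1
          have hgt : 1 < a (2 * k) := by rw [h2 k hk1]; linarith
          have han : a n = 1 / a (2 * k) := by rw [hk]; exact h3 k hk1
          refine ⟨by rw [han]; positivity, fun h => ?_, fun _ => ?_⟩
          · exfalso; obtain ⟨r, hr⟩ := h; omega
          · rw [han, div_le_one (by linarith)]; linarith
  intro m n hm hn heq
  obtain ⟨hmp, hme, hmo⟩ := key m hm
  obtain ⟨hnp, hne, hno⟩ := key n hn
  constructor
  · intro hem
    by_contra hon
    have := hme hem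
    have := hno hon
    linarith
  · intro hen
    by_contra hom
    have := hne hen
    have := hmo hom
    linarith
end

section
/- For all n ≥ 1, a(2^n − 1) = F(n) / F(n+1), where F is the Fibonacci sequence with F(1) = F(2) = 1. In particular, the right-hand edge of Kepler's tree consists of ratios of successive Fibonacci numbers. -/
theorem stmt10 (a : ℕ → ℚ) (h1 : a 1 = 1)
    (h2 : ∀ n : ℕ, 1 ≤ n → a (2 * n) = a n + 1)
    (h3 : ∀ n : ℕ, 1 ≤ n → a (2 * n + 1) = 1 / a (2 * n)) :
    ∀ n : ℕ, 1 ≤ n → a (2 ^ n - 1) = (Nat.fib n : ℚ) / (Nat.fib (n + 1) : ℚ) := by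
  intro n hn
  induction n with
  | zero => omega
  | succ m ih =>
    rcases Nat.eq_or_lt_of_le hn with h | h
    · simp [← h, h1]
    · have hm : 1 ≤ m := by omega
      have hkey : 2 ^ (m + 1) - 1 = 2 * (2 ^ m - 1) + 1 := by
        have : 1 ≤ 2 ^ m := Nat.one_le_two_pow
        omega
      have hpos : 1 ≤ 2 ^ m - 1 := by
        have : 2 ≤ 2 ^ m := by
          calc 2 = 2 ^ 1 := rfl
          _ ≤ 2 ^ m := Nat.pow_le_pow_right (by norm_num) hm
        omega
      rw [hkey, h3 _ hpos, h2 _ hpos, ih hm]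
      have f1 : (0 : ℚ) < Nat.fib (m + 1) := by
        exact_mod_cast Nat.fib_pos.2 (by omega)
      have f2 : (0 : ℚ) < Nat.fib (m + 2) := by
        exact_mod_cast Nat.fib_pos.2 (by omega)
      rw [Nat.fib_add_two]
      push_cast
      field_simp
end

section
/- The limit as n → ∞ of the real numbers a(2^n − 1) equals (√5 − 1)/2, the reciprocal of the golden ratio. -/
/-!
Along the indices `m = 2 ^ (n + 1) - 1` the two recursion rules combine to `a (2m + 1) = 1 / (a m + 1)`,
the map that sends `F n / F (n + 1)` to `F (n + 1) / F (n + 2)` for the Fibonacci numbers `F`.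
Hence `a (2 ^ n - 1) = F n / F (n + 1)` for `n ≥ 1`, and this ratio tends to `-ψ = (√5 - 1) / 2`.
-/

open Filter Nat Real
open scoped goldenRatio

section Field

variable {K : Type*} [Field K] [CharZero K]

theorem one_div_fib_div_fib_succ_add_one (n : ℕ) :
    1 / ((fib n : K) / fib (n + 1) + 1) = fib (n + 1) / fib (n + 2) := by
  have hsucc : (fib (n + 1) : K) ≠ 0 := by exact_mod_cast (fib_pos.2 n.succ_pos).ne'
  rw [fib_add_two, cast_add, div_add_one hsucc, one_div_div, add_comm]

theorem apply_two_pow_sub_one_eq_fib_div {a : ℕ → K} (h1 : a 1 = 1)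
    (h2 : ∀ n : ℕ, 1 ≤ n → a (2 * n) = a n + 1)
    (h3 : ∀ n : ℕ, 1 ≤ n → a (2 * n + 1) = 1 / a (2 * n)) (n : ℕ) :
    a (2 ^ (n + 1) - 1) = fib (n + 1) / fib (n + 2) := by
  induction n with
  | zero => simp [h1]
  | succ n ih =>
    have hpos : 1 ≤ 2 ^ (n + 1) - 1 := by
      have := Nat.one_lt_two_pow n.succ_ne_zero
      omega
    have hindex : 2 ^ (n + 2) - 1 = 2 * (2 ^ (n + 1) - 1) + 1 := by
      rw [pow_succ]
      omega
    rw [hindex, h3 _ hpos, h2 _ hpos, ih, one_div_fib_div_fib_succ_add_one]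

end Field

theorem neg_goldenConj_eq : -ψ = (√5 - 1) / 2 := by
  rw [goldenConj]
  ring

theorem stmt11 (a : ℕ → ℚ) (h1 : a 1 = 1)
    (h2 : ∀ n : ℕ, 1 ≤ n → a (2 * n) = a n + 1)
    (h3 : ∀ n : ℕ, 1 ≤ n → a (2 * n + 1) = 1 / a (2 * n)) :
    Filter.Tendsto (fun n : ℕ => ((a (2 ^ n - 1) : ℚ) : ℝ)) Filter.atTop
      (nhds ((Real.sqrt 5 - 1) / 2)) := by
  have hfib : (fun n : ℕ => ((a (2 ^ (n + 1) - 1) : ℚ) : ℝ)) =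
      fun n => (fib (n + 1) : ℝ) / fib (n + 1 + 1) := by
    funext n
    rw [apply_two_pow_sub_one_eq_fib_div h1 h2 h3, Rat.cast_div, Rat.cast_natCast, Rat.cast_natCast]
  rw [← tendsto_add_atTop_iff_nat 1, hfib, ← neg_goldenConj_eq]
  exact (tendsto_add_atTop_iff_nat 1).2 tendsto_fib_div_fib_succ_atTop
end

section
/- If n = 2^{n₀}·(1 + 2^{n₁}·(1 + 2^{n₂}·(⋯ 2^{n_{k−1}}·(1 + 2^{n_k})⋯))) with n₀ ≥ 0 and n_i > 0 for 1 ≤ i ≤ k, then a(n) equals the finite continued fraction n₀ + 1/(n₁ + 1/(n₂ + ⋯ + 1/(n_{k−1} + 1/(1 + n_k))⋯)). -/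
/-!
Doubling adds one to `a`, so `a (2 ^ n * m) = a m + n`, and an odd index `2 k + 1` turns `a (2 k)`
into its reciprocal. Peeling `2 ^ n₀ * (1 + cfIdx tail)` therefore produces `n₀ + 1 / a (cfIdx tail)`,
where `cfIdx tail` is even because the tail starts with a positive exponent; the last block
`2 ^ n_k` gives `a 1 + n_k = 1 + n_k`.
-/

/-- Value of the finite continued fraction n₀ + 1/(n₁ + 1/(⋯ + 1/(1 + n_k)⋯)). -/
def cfVal : List ℕ → ℚ
  | [] => 0
  | [n] => 1 + (n : ℚ)
  | n :: l => (n : ℚ) + 1 / cfVal l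

/-- The index 2^{n₀}·(1 + 2^{n₁}·(1 + ⋯ 2^{n_{k−1}}·(1 + 2^{n_k})⋯)). -/
def cfIdx : List ℕ → ℕ
  | [] => 1
  | [n] => 2 ^ n
  | n :: l => 2 ^ n * (1 + cfIdx l)

theorem cfIdx_cons_cons (n m : ℕ) (l : List ℕ) :
    cfIdx (n :: m :: l) = 2 ^ n * (1 + cfIdx (m :: l)) := rfl

theorem cfVal_cons_cons (n m : ℕ) (l : List ℕ) :
    cfVal (n :: m :: l) = n + 1 / cfVal (m :: l) := rfl

theorem cfIdx_pos : ∀ l : List ℕ, 0 < cfIdx l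
  | [] => Nat.one_pos
  | [_] => by simp [cfIdx]
  | _ :: _ :: _ => by simp [cfIdx]

theorem two_dvd_cfIdx_cons {m : ℕ} (hm : 0 < m) (l : List ℕ) : 2 ∣ cfIdx (m :: l) := by
  have h : 2 ∣ 2 ^ m := dvd_pow_self 2 hm.ne'
  cases l with
  | nil => exact h
  | cons _ _ => exact h.mul_right _

theorem apply_two_pow_mul {α : Type*} [AddMonoidWithOne α] {a : ℕ → α}
    (h2 : ∀ n : ℕ, 1 ≤ n → a (2 * n) = a n + 1) (n : ℕ) {m : ℕ} (hm : 1 ≤ m) :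
    a (2 ^ n * m) = a m + n := by
  induction n with
  | zero => simp
  | succ n ih =>
    have hpos : 1 ≤ 2 ^ n * m := Nat.mul_pos (Nat.two_pow_pos n) hm
    rw [pow_succ', mul_assoc, h2 _ hpos, ih, Nat.cast_succ, add_assoc]

theorem stmt12 (a : ℕ → ℚ) (h1 : a 1 = 1)
    (h2 : ∀ n : ℕ, 1 ≤ n → a (2 * n) = a n + 1)
    (h3 : ∀ n : ℕ, 1 ≤ n → a (2 * n + 1) = 1 / a (2 * n)) :
    ∀ ns : List ℕ, ns ≠ [] → (∀ i ∈ ns.tail, 0 < i) →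
      a (cfIdx ns) = cfVal ns := by
  intro ns hns htail
  induction ns with
  | nil => exact absurd rfl hns
  | cons n l ih =>
    cases l with
    | nil =>
      simpa [cfIdx, cfVal, h1, add_comm] using apply_two_pow_mul h2 n le_rfl
    | cons m l =>
      have htail' : ∀ i ∈ l, 0 < i := fun i hi => htail i (List.mem_cons_of_mem m hi)
      have hrec := ih (List.cons_ne_nil m l) htail'
      obtain ⟨k, hk⟩ := two_dvd_cfIdx_cons (htail m List.mem_cons_self) l
      have hk1 : 1 ≤ k := by have := cfIdx_pos (m :: l); omega
      calc a (cfIdx (n :: m :: l))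
          = a (2 ^ n * (2 * k + 1)) := by rw [cfIdx_cons_cons, hk, add_comm]
        _ = n + 1 / a (cfIdx (m :: l)) := by
          rw [apply_two_pow_mul h2 n (by omega), h3 k hk1, hk, add_comm]
        _ = cfVal (n :: m :: l) := by rw [hrec, cfVal_cons_cons]
end
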